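/- Let K ⊂ ℂ^n be a nonempty compact set, let ε, δ > 0, let k ≥ 1, and let p be a polynomial of degree at most k in n complex variables such that |p(ζ)| ≤ e^{kε} · sup_{ξ ∈ K} |p(ξ)| for every ζ ∈ ℂ^n with dist(ζ, K) ≤ δ. Let w ∈ K be a point with |p(w)| = sup_{ξ ∈ K} |p(ξ)|. Then for every z ∈ ℂ^n with |z − w| < (δ/3) e^{-kε} one has |p(z)| ≥ (1/2) sup_{ξ ∈ K} |p(ξ)|. -/

import Mathlib

/-!
On the complex line through `w` and `z`, the polynomial `p` is an entire function of one variable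
bounded by `e^{kε} M` (with `M = sup_K |p|`) on the disc of radius `δ` around `w`, since every
point of that disc lies within `δ` of `w ∈ K`. Cauchy's estimates for its Taylor coefficients at
`w` give `|p z - p w| ≤ e^{kε} M s / (δ - s)` where `s = |z - w|`, and this is at most `M / 2`
once `s < (δ / 3) e^{-kε}`. As `|p w| = M`, the claim follows.
-/

open Metric Set

theorem Complex.norm_sub_le_of_forall_mem_sphere_norm_le {F : Type*} [NormedAddCommGroup F]
    [NormedSpace ℂ F] [CompleteSpace F] {f : ℂ → F} {c z : ℂ} {R C : ℝ}
    (hf : DiffContOnCl ℂ f (ball c R)) (hC : ∀ ζ ∈ sphere c R, ‖f ζ‖ ≤ C) (hz : z ∈ ball c R) :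
    ‖f z - f c‖ ≤ C * ‖z - c‖ / (R - ‖z - c‖) := by
  have hR : 0 < R := pos_of_mem_ball hz
  have hzR : ‖z - c‖ < R := mem_ball_iff_norm.1 hz
  set x := ‖z - c‖ / R
  have hx0 : 0 ≤ x := by positivity
  have hx1 : x < 1 := (div_lt_one hR).2 hzR
  have htaylor := Complex.hasSum_taylorSeries_on_ball hf.differentiableOn hz
  have htail := (hasSum_nat_add_iff' 1).2 htaylor
  simp only [Finset.range_one, Finset.sum_singleton, Nat.factorial_zero, Nat.cast_one, inv_one,
    pow_zero, iteratedDeriv_zero, one_smul] at htail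
  have hgeom : HasSum (fun n : ℕ => C * x ^ (n + 1)) (C * x / (1 - x)) := by
    simpa [pow_succ, mul_assoc, mul_comm, mul_left_comm, div_eq_mul_inv]
      using ((hasSum_geometric_of_lt_one hx0 hx1).mul_left (C * x))
  refine (htail.norm_le_of_bounded hgeom fun n => ?_).trans_eq ?_
  · have hcauchy := Complex.norm_iteratedDeriv_le_of_forall_mem_sphere_norm_le (n + 1) hR hf hC
    calc ‖((n + 1).factorial : ℂ)⁻¹ • (z - c) ^ (n + 1) • iteratedDeriv (n + 1) f c‖
        = ((n + 1).factorial : ℝ)⁻¹ * ‖z - c‖ ^ (n + 1) * ‖iteratedDeriv (n + 1) f c‖ := by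
          simp [norm_smul, mul_assoc]
      _ ≤ ((n + 1).factorial : ℝ)⁻¹ * ‖z - c‖ ^ (n + 1) *
            ((n + 1).factorial * C / R ^ (n + 1)) := by gcongr
      _ = C * x ^ (n + 1) := by simp only [x, div_pow]; field_simp
  · simp only [x]; field_simp

theorem norm_sub_le_of_forall_mem_closedBall_norm_le {E F : Type*} [NormedAddCommGroup E]
    [NormedSpace ℂ E] [NormedAddCommGroup F] [NormedSpace ℂ F] [CompleteSpace F] {f : E → F}
    {w z : E} {δ C : ℝ} (hf : DifferentiableOn ℂ f (closedBall w δ))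
    (hC : ∀ ζ ∈ closedBall w δ, ‖f ζ‖ ≤ C) (hz : z ∈ ball w δ) :
    ‖f z - f w‖ ≤ C * ‖z - w‖ / (δ - ‖z - w‖) := by
  rcases eq_or_ne z w with rfl | hzw
  · simp
  set s := ‖z - w‖
  have hs : 0 < s := norm_pos_iff.2 (sub_ne_zero.2 hzw)
  set u : E := (s : ℂ)⁻¹ • (z - w)
  have hu : ‖u‖ = 1 := by simp [u, norm_smul, s, hs.ne']
  set ℓ : ℂ → E := fun t => w + t • u
  have hℓ : MapsTo ℓ (closedBall 0 δ) (closedBall w δ) := fun t ht => by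
    simpa [ℓ, norm_smul, hu] using ht
  have hℓz : ℓ s = z := by simp [ℓ, u, smul_smul, hs.ne']
  have hg : DiffContOnCl ℂ (f ∘ ℓ) (ball 0 δ) :=
    DifferentiableOn.diffContOnCl <| (hf.comp (by fun_prop) hℓ).mono closure_ball_subset_closedBall
  have hℓ0 : ℓ 0 = w := by simp [ℓ]
  have hnorm_s : ‖(s : ℂ) - 0‖ = s := by simp [hs.le]
  have hs_mem : (s : ℂ) ∈ ball (0 : ℂ) δ := by
    rw [mem_ball_iff_norm, hnorm_s]; exact mem_ball_iff_norm.1 hz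
  have := Complex.norm_sub_le_of_forall_mem_sphere_norm_le hg
    (fun t ht => hC _ (hℓ (sphere_subset_closedBall ht))) hs_mem
  rwa [Function.comp_apply, Function.comp_apply, hℓz, hℓ0, hnorm_s] at this

theorem MvPolynomial.differentiable_eval_euclideanSpace {ι : Type*} [Fintype ι]
    (p : MvPolynomial ι ℂ) :
    Differentiable ℂ fun ζ : EuclideanSpace ℂ ι => MvPolynomial.eval (fun i => ζ i) p := by
  intro ζ
  exact (AnalyticOnNhd.eval_continuousLinearMap'
    (fun i => EuclideanSpace.proj (𝕜 := ℂ) (ι := ι) i) p ζ (mem_univ ζ)).differentiableAt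

theorem near_max_lower_bound {n : ℕ}
    (K : Set (EuclideanSpace ℂ (Fin n)))
    (ε δ : ℝ) (hε : 0 < ε) (k : ℕ)
    (p : MvPolynomial (Fin n) ℂ)
    (hbd : ∀ ζ : EuclideanSpace ℂ (Fin n), Metric.infDist ζ K ≤ δ →
      ‖MvPolynomial.eval (fun i => ζ i) p‖ ≤ Real.exp ((k : ℝ) * ε) *
        sSup ((fun ξ : EuclideanSpace ℂ (Fin n) => ‖MvPolynomial.eval (fun i => ξ i) p‖) '' K))
    (w : EuclideanSpace ℂ (Fin n)) (hw : w ∈ K)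
    (hmax : ‖MvPolynomial.eval (fun i => w i) p‖ =
      sSup ((fun ξ : EuclideanSpace ℂ (Fin n) => ‖MvPolynomial.eval (fun i => ξ i) p‖) '' K))
    (z : EuclideanSpace ℂ (Fin n))
    (hz : ‖z - w‖ < δ / 3 * Real.exp (-((k : ℝ) * ε))) :
    (1 / 2) * sSup ((fun ξ : EuclideanSpace ℂ (Fin n) =>
        ‖MvPolynomial.eval (fun i => ξ i) p‖) '' K) ≤
      ‖MvPolynomial.eval (fun i => z i) p‖ := by
  set M := sSup ((fun ξ : EuclideanSpace ℂ (Fin n) => ‖MvPolynomial.eval (fun i => ξ i) p‖) '' K)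
  set f := fun ζ : EuclideanSpace ℂ (Fin n) => MvPolynomial.eval (fun i => ζ i) p
  set a := Real.exp (-((k : ℝ) * ε))
  have ha : a ≤ 1 := Real.exp_le_one_iff.2 (by nlinarith [(k.cast_nonneg : (0 : ℝ) ≤ k)])
  have hM : 0 ≤ M := hmax ▸ norm_nonneg _
  have hs : 0 ≤ ‖z - w‖ := norm_nonneg _
  have hzδ : z ∈ ball w δ := mem_ball_iff_norm.2 (by nlinarith [Real.exp_pos (-((k : ℝ) * ε))])
  have hbound : ∀ ζ ∈ closedBall w δ, ‖f ζ‖ ≤ a⁻¹ * M := fun ζ hζ => by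
    simpa [a, ← Real.exp_neg] using hbd ζ ((infDist_le_dist_of_mem hw).trans hζ)
  have hclose := norm_sub_le_of_forall_mem_closedBall_norm_le
    (MvPolynomial.differentiable_eval_euclideanSpace p).differentiableOn hbound hzδ
  have hsmall : a⁻¹ * M * ‖z - w‖ / (δ - ‖z - w‖) ≤ M / 2 := by
    have ha0 : 0 < a := Real.exp_pos _
    rw [div_le_iff₀ (by nlinarith), inv_mul_eq_div, div_mul_eq_mul_div, div_le_iff₀ ha0]
    nlinarith [mul_le_mul_of_nonneg_left hz.le hM, mul_le_mul_of_nonneg_left ha hM]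
  have hreverse : ‖f w‖ - ‖f z‖ ≤ ‖f z - f w‖ :=
    norm_sub_rev (f z) (f w) ▸ norm_sub_norm_le _ _
  linarith
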